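/- Let k and n be positive integers and let (a_n)_{n≥1} be the {1,...,k}-LID sequence. Then the largest integer admitting a {1,...,k}-LID decomposition using {a_1, ..., a_n} is ∑ a_{n−i(k+1)}, where the sum ranges over all nonnegative integers i with n − i(k+1) ≥ 1. Consequently, a_{n+1} ≤ 1 + ∑ a_{n−i(k+1)} over the same range of i. -/

import Mathlib

/-- `L` is an `S`-legal index set: all pairwise index differences avoid `S`. -/
def SlidLegal (S : Set ℕ) (L : Finset ℕ) : Prop :=
  ∀ i ∈ L, ∀ j ∈ L, ((i : ℤ) - (j : ℤ)).natAbs ∉ S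

/-- `m` has an `S`-LID decomposition using the terms `a 1, …, a n`. -/
def SlidDecomp (S : Set ℕ) (a : ℕ → ℕ) (n m : ℕ) : Prop :=
  ∃ L : Finset ℕ, L ⊆ Finset.Icc 1 n ∧ SlidLegal S L ∧ m = ∑ ℓ ∈ L, a ℓ

/-- `a` is the `S`-LID sequence (indexed from `1`; `a 0` is unconstrained):
for each `n ≥ 1`, `a n` is the least positive integer with no `S`-LID
decomposition using `a 1, …, a (n-1)`. -/
def IsSlidSeq (S : Set ℕ) (a : ℕ → ℕ) : Prop :=
  ∀ n, 1 ≤ n → IsLeast {m | 0 < m ∧ ¬ SlidDecomp S a (n - 1) m} (a n)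


/-! The indices `n, n - (k + 1), n - 2 (k + 1), …` are pairwise at distance at least `k + 1`,
so they form a legal set. Conversely, if `M` is the largest index of a legal set `L ⊆ [1, n]`,
the other indices lie in `[1, M - (k + 1)] ⊆ [1, n - (k + 1)]`; since the LID sequence is
nondecreasing (a later term is also a candidate for an earlier one), `a M ≤ a n` and induction
bounds the sum over `L` by the chain sum. The bound on `a (n + 1)` follows because one more than
the greatest decomposable value is positive and not decomposable. -/

open Finset

lemma SlidLegal.mono {S : Set ℕ} {L L' : Finset ℕ} (h : SlidLegal S L) (hL' : L' ⊆ L) :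
    SlidLegal S L' :=
  fun i hi j hj => h i (hL' hi) j (hL' hj)

lemma SlidDecomp.mono {S : Set ℕ} {a : ℕ → ℕ} {m n x : ℕ} (hd : SlidDecomp S a m x)
    (hmn : m ≤ n) : SlidDecomp S a n x := by
  obtain ⟨L, hL, hleg, rfl⟩ := hd
  exact ⟨L, hL.trans (Icc_subset_Icc_right hmn), hleg, rfl⟩

lemma IsSlidSeq.monotoneOn {S : Set ℕ} {a : ℕ → ℕ} (ha : IsSlidSeq S a) :
    MonotoneOn a (Set.Ici 1) := by
  intro m hm n hn hmn
  exact (ha m hm).2 ⟨(ha n hn).1.1, fun hd => (ha n hn).1.2 (hd.mono (by omega))⟩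

lemma natAbs_mul_succ_notMem_Icc (d : ℤ) (k : ℕ) :
    (d * (k + 1 : ℕ)).natAbs ∉ Set.Icc 1 k := by
  rintro ⟨h1, h2⟩
  rw [Int.natAbs_mul, Int.natAbs_natCast] at h1 h2
  rcases Nat.eq_zero_or_pos d.natAbs with hd | hd
  · simp [hd] at h1
  · have := Nat.le_mul_of_pos_left (k + 1) hd
    omega

/-- The sum of `a ℓ` over the indices `ℓ = n, n - (k + 1), n - 2 (k + 1), …` that are `≥ 1`. -/
def chainSum (k : ℕ) (a : ℕ → ℕ) (n : ℕ) : ℕ :=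
  ∑ i ∈ (range (n + 1)).filter (fun i => 1 ≤ n - i * (k + 1)), a (n - i * (k + 1))

lemma mem_range_div_iff {k n i : ℕ} : i ∈ range ((n + k) / (k + 1)) ↔ i * (k + 1) < n := by
  rw [mem_range, ← Nat.add_one_le_iff, Nat.le_div_iff_mul_le k.add_one_pos, Nat.add_one_mul]
  omega

lemma chainSum_eq_sum_range (k : ℕ) (a : ℕ → ℕ) (n : ℕ) :
    chainSum k a n = ∑ i ∈ range ((n + k) / (k + 1)), a (n - i * (k + 1)) := by
  refine sum_congr (ext fun i => ?_) fun _ _ => rfl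
  have : i ≤ i * (k + 1) := Nat.le_mul_of_pos_right _ k.add_one_pos
  rw [mem_filter, mem_range, mem_range_div_iff]
  omega

lemma chainSum_eq_add {n : ℕ} (k : ℕ) (a : ℕ → ℕ) (hn : 1 ≤ n) :
    chainSum k a n = a n + chainSum k a (n - (k + 1)) := by
  have hlen : (n + k) / (k + 1) = (n - (k + 1) + k) / (k + 1) + 1 := by
    rcases le_or_gt n (k + 1) with h | h
    · rw [Nat.sub_eq_zero_of_le h, Nat.zero_add, Nat.div_eq_of_lt (Nat.lt_succ_self k),
        Nat.div_eq_iff k.add_one_pos]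
      constructor <;> omega
    · rw [← Nat.add_div_right _ k.add_one_pos]
      congr 1
      omega
  rw [chainSum_eq_sum_range, chainSum_eq_sum_range, hlen, sum_range_succ', add_comm]
  congr 1
  · simp
  · refine sum_congr rfl fun i _ => congrArg a ?_
    rw [Nat.add_one_mul]
    omega

lemma slidDecomp_chainSum (k : ℕ) (a : ℕ → ℕ) (n : ℕ) :
    SlidDecomp (Set.Icc 1 k) a n (chainSum k a n) := by
  refine ⟨(range ((n + k) / (k + 1))).image (fun i => n - i * (k + 1)), ?_, ?_, ?_⟩
  · intro x hx
    obtain ⟨i, hi, rfl⟩ := mem_image.1 hx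
    have := mem_range_div_iff.1 hi
    exact mem_Icc.2 ⟨by omega, by omega⟩
  · intro x hx y hy
    obtain ⟨i, hi, rfl⟩ := mem_image.1 hx
    obtain ⟨j, hj, rfl⟩ := mem_image.1 hy
    have hi' := (mem_range_div_iff.1 hi).le
    have hj' := (mem_range_div_iff.1 hj).le
    have : ((n - i * (k + 1) : ℕ) : ℤ) - (n - j * (k + 1) : ℕ) = (j - i : ℤ) * (k + 1 : ℕ) := by
      push_cast [Nat.cast_sub hi', Nat.cast_sub hj']
      ring
    rw [this]
    exact natAbs_mul_succ_notMem_Icc _ k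
  · rw [sum_image, chainSum_eq_sum_range]
    intro i hi j hj hij
    have := mem_range_div_iff.1 hi
    have := mem_range_div_iff.1 hj
    exact Nat.eq_of_mul_eq_mul_right k.add_one_pos (by simp only at hij; omega)

lemma sum_le_chainSum {k : ℕ} {a : ℕ → ℕ} (ha : MonotoneOn a (Set.Ici 1)) (L : Finset ℕ)
    (hleg : SlidLegal (Set.Icc 1 k) L) {n : ℕ} (hL : L ⊆ Icc 1 n) :
    ∑ ℓ ∈ L, a ℓ ≤ chainSum k a n := by
  induction L using Finset.induction_on_max generalizing n with
  | empty => simp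
  | insert M L hlt ih =>
    have hM := mem_Icc.1 (hL (mem_insert_self M L))
    have hrest : L ⊆ Icc 1 (n - (k + 1)) := by
      intro j hj
      have hj1 := (mem_Icc.1 (hL (mem_insert_of_mem hj))).1
      have hjM := hlt j hj
      have hgap := hleg M (mem_insert_self M L) j (mem_insert_of_mem hj)
      simp only [Set.mem_Icc, not_and, not_le] at hgap
      exact mem_Icc.2 ⟨hj1, by omega⟩
    rw [sum_insert fun h => (hlt M h).false, chainSum_eq_add k a (hM.1.trans hM.2)]
    exact add_le_add (ha hM.1 (hM.1.trans hM.2) hM.2)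
      (ih (hleg.mono (subset_insert M L)) hrest)

theorem interval_slid_greatest_decomposable_general
    (k n : ℕ)
    (a : ℕ → ℕ) (ha : IsSlidSeq (Set.Icc 1 k) a) :
    IsGreatest {m | SlidDecomp (Set.Icc 1 k) a n m}
      (∑ i ∈ (Finset.range (n + 1)).filter (fun i => 1 ≤ n - i * (k + 1)),
        a (n - i * (k + 1))) ∧
    a (n + 1) ≤ 1 + ∑ i ∈ (Finset.range (n + 1)).filter
        (fun i => 1 ≤ n - i * (k + 1)), a (n - i * (k + 1)) := by
  change IsGreatest _ (chainSum k a n) ∧ a (n + 1) ≤ 1 + chainSum k a n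
  have hgreatest : IsGreatest {m | SlidDecomp (Set.Icc 1 k) a n m} (chainSum k a n) := by
    refine ⟨slidDecomp_chainSum k a n, ?_⟩
    rintro _ ⟨L, hL, hleg, rfl⟩
    exact sum_le_chainSum ha.monotoneOn L hleg hL
  refine ⟨hgreatest, (ha (n + 1) n.succ_pos).2 ⟨by omega, fun hd => ?_⟩⟩
  have := hgreatest.2 hd
  omega

theorem interval_slid_greatest_decomposable
    (k n : ℕ) (hk : 1 ≤ k) (hn : 1 ≤ n)
    (a : ℕ → ℕ) (ha : IsSlidSeq (Set.Icc 1 k) a) :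
    IsGreatest {m | SlidDecomp (Set.Icc 1 k) a n m}
      (∑ i ∈ (Finset.range (n + 1)).filter (fun i => 1 ≤ n - i * (k + 1)),
        a (n - i * (k + 1))) ∧
    a (n + 1) ≤ 1 + ∑ i ∈ (Finset.range (n + 1)).filter
        (fun i => 1 ≤ n - i * (k + 1)), a (n - i * (k + 1)) :=
  interval_slid_greatest_decomposable_general k n a ha
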